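/- arXiv:2408.00396 — 2 statements merged into one kernel-verified Lean document; each statement's English description precedes it below -/
import Mathlib

section
/- Let $H$ be a real inner product space, let $\kappa, \Delta t, C_I, H_0 > 0$, let $I_H : H \to H$ be linear, and suppose $\|\phi - I_H\phi\| \le C_I H_0 \|\nabla\phi\|$ for some seminorm $\|\nabla\cdot\|$. If $\mu \ge \frac{\kappa}{2 C_I^2 H_0^2}$, then for all $\phi$: $2\kappa\Delta t\|\nabla\phi\|^2 + 2\mu\Delta t\|I_H\phi\|^2 \ge \frac{\kappa\Delta t}{2 C_I^2 H_0^2}\|\phi\|^2 + \kappa\Delta t\|\nabla\phi\|^2$. -/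
/-!
By the triangle inequality and `(a + b)² ≤ 2(a² + b²)`, the interpolation estimate gives
`‖φ‖² ≤ 2 C_I² H₀² ‖∇φ‖² + 2 ‖I_H φ‖²`. Multiplying by `κ / (2 C_I² H₀²) ≤ μ` bounds
`κ / (2 C_I² H₀²) ‖φ‖²` by `κ ‖∇φ‖² + 2 μ ‖I_H φ‖²`, i.e. half of the diffusion term and the
whole nudging term control the `L²` norm.
-/

theorem norm_sq_le_two_mul_norm_sub_sq_add_norm_sq {E : Type*} [SeminormedAddCommGroup E]
    (x y : E) : ‖x‖ ^ 2 ≤ 2 * (‖x - y‖ ^ 2 + ‖y‖ ^ 2) :=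
  calc ‖x‖ ^ 2 ≤ (‖x - y‖ + ‖y‖) ^ 2 := by
        gcongr
        simpa using norm_add_le (x - y) y
    _ ≤ 2 * (‖x - y‖ ^ 2 + ‖y‖ ^ 2) := add_sq_le

theorem norm_sq_le_of_norm_sub_le {E : Type*} [SeminormedAddCommGroup E] {x y : E} {r : ℝ}
    (h : ‖x - y‖ ≤ r) : ‖x‖ ^ 2 ≤ 2 * (r ^ 2 + ‖y‖ ^ 2) :=
  calc ‖x‖ ^ 2 ≤ 2 * (‖x - y‖ ^ 2 + ‖y‖ ^ 2) := norm_sq_le_two_mul_norm_sub_sq_add_norm_sq x y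
    _ ≤ 2 * (r ^ 2 + ‖y‖ ^ 2) := by gcongr

/-- Lower bound (3.8) in the heat-equation CDA analysis. -/
theorem heat_cda_lower_bound {H : Type*} [NormedAddCommGroup H] [InnerProductSpace ℝ H]
    (κ Δt CI H0 μ : ℝ) (IH : H →ₗ[ℝ] H) (g : H → ℝ)
    (hκ : 0 < κ) (hΔt : 0 < Δt) (hCI : 0 < CI) (hH0 : 0 < H0)
    (hinterp : ∀ φ : H, ‖φ - IH φ‖ ≤ CI * H0 * g φ)
    (hμ : μ ≥ κ / (2 * CI^2 * H0^2)) :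
    ∀ φ : H,
      2 * κ * Δt * (g φ)^2 + 2 * μ * Δt * ‖IH φ‖^2
        ≥ κ * Δt / (2 * CI^2 * H0^2) * ‖φ‖^2 + κ * Δt * (g φ)^2 := by
  intro φ
  set c := 2 * CI ^ 2 * H0 ^ 2
  have hc : 0 < c := by positivity
  have hsplit : ‖φ‖ ^ 2 ≤ 2 * ((CI * H0 * g φ) ^ 2 + ‖IH φ‖ ^ 2) :=
    norm_sq_le_of_norm_sub_le (hinterp φ)
  have hcontrol : κ / c * ‖φ‖ ^ 2 ≤ κ * (g φ) ^ 2 + 2 * μ * ‖IH φ‖ ^ 2 :=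
    calc κ / c * ‖φ‖ ^ 2 ≤ κ / c * (2 * ((CI * H0 * g φ) ^ 2 + ‖IH φ‖ ^ 2)) := by gcongr
      _ = κ / c * c * (g φ) ^ 2 + 2 * (κ / c) * ‖IH φ‖ ^ 2 := by ring
      _ ≤ κ * (g φ) ^ 2 + 2 * μ * ‖IH φ‖ ^ 2 := by
        rw [div_mul_cancel₀ κ hc.ne']
        gcongr
  calc κ * Δt / c * ‖φ‖ ^ 2 + κ * Δt * (g φ) ^ 2
      = Δt * (κ / c * ‖φ‖ ^ 2) + κ * Δt * (g φ) ^ 2 := by ring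
    _ ≤ Δt * (κ * (g φ) ^ 2 + 2 * μ * ‖IH φ‖ ^ 2) + κ * Δt * (g φ) ^ 2 := by gcongr
    _ = 2 * κ * Δt * (g φ) ^ 2 + 2 * μ * Δt * ‖IH φ‖ ^ 2 := by ring
end

section
/- Let $V$ be a real inner product space with norm $\|\cdot\|_1$ (induced by a bilinear form $a$), let $u \in V$, let $V_h \subset V$ be a subspace, let $J : V \to H$ be linear, and suppose there exists $I_h u \in V_h$ with $J(u - I_h u) = 0$. Let $u_h \in V_h$ satisfy $a(u - u_h, v_h) + \mu (J(u - u_h), J v_h)_H = 0$ for all $v_h \in V_h$, where $\mu \ge 0$. Then $\|u - u_h\|_1^2 + \mu\|J(u - u_h)\|_H^2 \le 4\|u - I_h u\|_1^2$, with constant independent of $\mu$. -/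
/-- Abstract `H¹`-type error estimate for the CDA projection, independent of `μ`. -/
theorem cda_projection_error {V H : Type*}
    [NormedAddCommGroup V] [InnerProductSpace ℝ V]
    [NormedAddCommGroup H] [InnerProductSpace ℝ H]
    (a : V →ₗ[ℝ] V →ₗ[ℝ] ℝ) (Vh : Submodule ℝ V) (J : V →ₗ[ℝ] H)
    (μ : ℝ) (u Ihu uh : V)
    (hsymm : ∀ x y, a x y = a y x)
    (hpsd : ∀ x, 0 ≤ a x x)
    (hIhu : Ihu ∈ Vh) (hJ : J (u - Ihu) = 0)
    (huh : uh ∈ Vh)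
    (horth : ∀ vh ∈ Vh,
        a (u - uh) vh + μ * (inner ℝ (J (u - uh)) (J vh) : ℝ) = 0)
    (hμ : 0 ≤ μ) :
    a (u - uh) (u - uh) + μ * ‖J (u - uh)‖^2 ≤ 4 * a (u - Ihu) (u - Ihu) := by
  set e := u - uh with he
  set η := u - Ihu with hη
  set φ := Ihu - uh with hφdef
  have hφ : φ ∈ Vh := Vh.sub_mem hIhu huh
  have heφ : e = η + φ := by rw [he, hη, hφdef]; abel
  have hJφ : J φ = J e := by
    have : J e = J η + J φ := by rw [heφ, map_add]
    rw [hJ] at this; simpa using this.symm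
  have h1 := horth φ hφ
  rw [hJφ, real_inner_self_eq_norm_sq] at h1
  -- a e e = a e η + a e φ
  have h2 : a e e = a e η + a e φ := by rw [heφ, map_add]
  -- expansion of a φ φ with φ = e - η
  have hφe : φ = e - η := by rw [heφ]; abel
  have h3 : a φ φ = a e e - 2 * a e η + a η η := by
    have hsy := hsymm e η
    rw [hφe]; simp only [map_sub, LinearMap.sub_apply]; linarith
  have h4 := hpsd φ
  have h5 := hpsd e
  have h6 : 0 ≤ μ * ‖J e‖ ^ 2 := by positivity
  nlinarith [hpsd η]
end
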